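/- arXiv:2311.01351 — 2 statements merged into one kernel-verified Lean document; each statement's English description precedes it below -/
import Mathlib

section
/- Minimality and maximality of the unravelled canonical models: the unravelling U(Mc^min) of the canonical pseudo-model of SCmin is a minimal partial epistemic model (for all histories h, h' with live(h) ⊊ live(h') there is an alive agent of h distinguishing them), and the unravelling U(Mc^max) of the canonical pseudo-model of SCmax is a maximal partial epistemic model (for every history h' and every nonempty B ⊊ live(h') there is a history h with live(h) = B and h ∼^U_a h' for all a ∈ B); the same holds for their quotients by the equivalence ≡. -/
attribute [local instance] Classical.propDecidable

noncomputable section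

/-- Formulas of the epistemic language `L_D` with distributed knowledge `D_B`
for nonempty groups `B` of agents. -/
inductive Form (A AP : Type) : Type
  | atom : AP → Form A AP
  | neg  : Form A AP → Form A AP
  | and  : Form A AP → Form A AP → Form A AP
  | dk   : (B : Finset A) → B.Nonempty → Form A AP → Form A AP

namespace Form

variable {A AP : Type}

/-- Disjunction, `φ ∨ ψ := ¬(¬φ ∧ ¬ψ)`. -/
def or (φ ψ : Form A AP) : Form A AP := neg ((neg φ).and (neg ψ))

/-- Implication, `φ ⇒ ψ := ¬φ ∨ ψ`. -/
def imp (φ ψ : Form A AP) : Form A AP := (neg φ).or ψ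

/-- `⊤ := p ∨ ¬p`. -/
def verum [Nonempty AP] : Form A AP :=
  (atom (Classical.arbitrary AP)).or (neg (atom (Classical.arbitrary AP)))

/-- `⊥ := ¬⊤`. -/
def falsum [Nonempty AP] : Form A AP := neg verum

/-- Individual knowledge `K_a φ := D_{{a}} φ`. -/
def K (a : A) (φ : Form A AP) : Form A AP := dk {a} (Finset.singleton_nonempty a) φ

/-- `dead_a := K_a ⊥`. -/
def deadAgent [Nonempty AP] (a : A) : Form A AP := K a falsum

/-- `alive_a := ¬dead_a`. -/
def aliveAgent [Nonempty AP] (a : A) : Form A AP := (deadAgent a).neg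

/-- `alive_B := ¬ D_B ⊥`. -/
def aliveGrp [Nonempty AP] (B : Finset A) (hB : B.Nonempty) : Form A AP := (dk B hB falsum).neg

/-- Finite conjunction. -/
def bigAnd [Nonempty AP] : List (Form A AP) → Form A AP
  | [] => verum
  | φ :: t => φ.and (bigAnd t)

/-- Finite disjunction. -/
def bigOr [Nonempty AP] : List (Form A AP) → Form A AP
  | [] => falsum
  | φ :: t => φ.or (bigOr t)

/-- `dead_C := ⋀_{a ∈ C} dead_a`. -/
def deadGrp [Nonempty AP] (C : Finset A) : Form A AP := bigAnd (C.toList.map deadAgent)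

end Form

/-- A propositional tautology: true under every assignment that interprets `¬` and `∧`
classically (atoms and `D_B`-formulas are treated as opaque). -/
def IsTaut {A AP : Type} (φ : Form A AP) : Prop :=
  ∀ v : Form A AP → Prop,
    (∀ ψ : Form A AP, v ψ.neg ↔ ¬ v ψ) →
    (∀ ψ χ : Form A AP, v (ψ.and χ) ↔ (v ψ ∧ v χ)) →
    v φ

theorem unionNE {α : Type} [DecidableEq α] {s t : Finset α} (h : s.Nonempty) :
    (s ∪ t).Nonempty :=
  ⟨h.choose, Finset.mem_union_left _ h.choose_spec⟩

section ProofSystem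

variable {A AP : Type} [Fintype A] [Nonempty AP]

/-- The proof system `SC` (axioms `K`, `B`, `4`, `Mono`, `Union`, `NE`, `P`, all
propositional tautologies, modus ponens and necessitation), extended by an arbitrary
additional set `Ax` of axioms. -/
inductive Prf (Ax : Form A AP → Prop) : Form A AP → Prop
  | taut {φ : Form A AP} : IsTaut φ → Prf Ax φ
  | mp {φ ψ : Form A AP} : Prf Ax (φ.imp ψ) → Prf Ax φ → Prf Ax ψ
  | nec {φ : Form A AP} (B : Finset A) (hB : B.Nonempty) :
      Prf Ax φ → Prf Ax (Form.dk B hB φ)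
  | axK {φ ψ : Form A AP} (B : Finset A) (hB : B.Nonempty) :
      Prf Ax ((Form.dk B hB (φ.imp ψ)).imp ((Form.dk B hB φ).imp (Form.dk B hB ψ)))
  | axB {φ : Form A AP} (B : Finset A) (hB : B.Nonempty) :
      Prf Ax (φ.imp (Form.dk B hB (Form.neg (Form.dk B hB φ.neg))))
  | ax4 {φ : Form A AP} (B : Finset A) (hB : B.Nonempty) :
      Prf Ax ((Form.dk B hB φ).imp (Form.dk B hB (Form.dk B hB φ)))
  | axMono {φ : Form A AP} (B B' : Finset A) (hB : B.Nonempty) (hB' : B'.Nonempty)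
      (hsub : B ⊆ B') : Prf Ax ((Form.dk B hB φ).imp (Form.dk B' hB' φ))
  | axUnion (B B' : Finset A) (hB : B.Nonempty) (hB' : B'.Nonempty) :
      Prf Ax (((Form.aliveGrp B hB).and (Form.aliveGrp B' hB')).imp
        (Form.aliveGrp (B ∪ B') (unionNE hB)))
  | axNE : Prf Ax (Form.bigOr ((Finset.univ : Finset A).toList.map Form.aliveAgent))
  | axP {φ : Form A AP} (B : Finset A) (hB : B.Nonempty) :
      Prf Ax ((((Form.aliveGrp B hB).and (Form.deadGrp Bᶜ)).and φ).imp
        (Form.dk B hB ((Form.deadGrp Bᶜ).imp φ)))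
  | extra {φ : Form A AP} : Ax φ → Prf Ax φ

/-- Provability in `SC` itself (no extra axioms). -/
def SC : Form A AP → Prop := Prf (fun _ => False)

/-- Instances of Axiom `Min : alive_B ∧ dead_{A∖B} ⇒ D_B dead_{A∖B}` for `B ⊊ A`. -/
def MinAx : Form A AP → Prop := fun φ =>
  ∃ (B : Finset A) (hB : B.Nonempty), B ≠ Finset.univ ∧
    φ = ((Form.aliveGrp B hB).and (Form.deadGrp Bᶜ)).imp (Form.dk B hB (Form.deadGrp Bᶜ))

/-- Instances of Axiom `Max : alive_B ⇒ ¬ D_B ¬ dead_{A∖B}` for `B ⊊ A`. -/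
def MaxAx : Form A AP → Prop := fun φ =>
  ∃ (B : Finset A) (hB : B.Nonempty), B ≠ Finset.univ ∧
    φ = (Form.aliveGrp B hB).imp (Form.neg (Form.dk B hB (Form.neg (Form.deadGrp Bᶜ))))

/-- Provability in `SCmin = SC + Min`. -/
def SCmin : Form A AP → Prop := Prf MinAx

/-- Provability in `SCmax = SC + Max`. -/
def SCmax : Form A AP → Prop := Prf MaxAx

/-- `Γ ⊢_P φ` : some finite conjunction of members of `Γ` provably implies `φ`. -/
def ProvesFrom (P : Form A AP → Prop) (Γ : Set (Form A AP)) (φ : Form A AP) : Prop :=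
  ∃ L : List (Form A AP), (∀ γ ∈ L, γ ∈ Γ) ∧ P ((Form.bigAnd L).imp φ)

/-- Consistency of a set of formulas with respect to a provability predicate `P`. -/
def ConsistentSet (P : Form A AP → Prop) (Γ : Set (Form A AP)) : Prop :=
  ¬ ProvesFrom P Γ Form.falsum

/-- Maximal consistent sets of formulas. -/
def MaxConsistent (P : Form A AP → Prop) (Γ : Set (Form A AP)) : Prop :=
  ConsistentSet P Γ ∧ ∀ φ ∉ Γ, ¬ ConsistentSet P (insert φ Γ)

end ProofSystem

/-! ### Simplicial models -/

/-- The data of a (generalized) simplicial model: a set `S` of simplexes over the vertex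
type `V`, a colouring `chi`, a set of worlds `Wld` and a labelling of worlds. -/
structure SimpData (A AP V : Type) where
  S : Set (Finset V)
  chi : V → A
  Wld : Set (Finset V)
  label : Finset V → Set AP

namespace SimpData

variable {A AP V : Type}

/-- A facet: a simplex maximal under inclusion. -/
def IsFacet (C : SimpData A AP V) (X : Finset V) : Prop :=
  X ∈ C.S ∧ ∀ Y ∈ C.S, X ⊆ Y → X = Y

/-- `⟨V,S,chi⟩` is a chromatic simplicial complex: simplexes are nonempty, every
singleton is a simplex, `S` is downward closed, and every simplex has pairwise
distinct colours. -/
def IsComplex (C : SimpData A AP V) : Prop :=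
  (∀ X ∈ C.S, X.Nonempty) ∧
  (∀ v : V, ({v} : Finset V) ∈ C.S) ∧
  (∀ X ∈ C.S, ∀ Y : Finset V, Y ⊆ X → Y.Nonempty → Y ∈ C.S) ∧
  (∀ X ∈ C.S, ∀ v ∈ X, ∀ w ∈ X, C.chi v = C.chi w → v = w)

/-- `C` is a generalized simplicial model: a chromatic simplicial complex together
with a set of worlds `Wld` with `Facets(C) ⊆ Wld ⊆ S`. -/
def IsModel (C : SimpData A AP V) : Prop :=
  C.IsComplex ∧ (∀ X, C.IsFacet X → X ∈ C.Wld) ∧ C.Wld ⊆ C.S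

/-- The model is minimal: the worlds are exactly the facets. -/
def Minimal (C : SimpData A AP V) : Prop := ∀ X, X ∈ C.Wld ↔ C.IsFacet X

/-- The model is maximal: every simplex is a world. -/
def Maximal (C : SimpData A AP V) : Prop := C.Wld = C.S

end SimpData

/-- Satisfaction on simplicial models: `C,w ⊨ D_B φ` iff `φ` holds at every world `w'`
with `B ⊆ chi(w ∩ w')`. -/
def SimpData.sat {A AP V : Type} (C : SimpData A AP V) : Finset V → Form A AP → Prop
  | w, .atom p => p ∈ C.label w
  | w, .neg φ => ¬ C.sat w φ
  | w, .and φ ψ => C.sat w φ ∧ C.sat w ψ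
  | w, .dk B _ φ => ∀ w' ∈ C.Wld, (↑B : Set A) ⊆ C.chi '' ((↑w : Set V) ∩ ↑w') → C.sat w' φ

/-! ### Partial epistemic models -/

/-- The data of a partial epistemic model: an accessibility relation for each agent and
a labelling of worlds. -/
structure PEData (A AP W : Type) where
  rel : A → W → W → Prop
  label : W → Set AP

namespace PEData

variable {A AP W : Type}

/-- Each relation is a partial equivalence relation (symmetric and transitive). -/
def IsPE (M : PEData A AP W) : Prop := ∀ a : A, Symmetric (M.rel a) ∧ Transitive (M.rel a)

/-- The set of agents alive in a world. -/
def live (M : PEData A AP W) (w : W) : Set A := {a | M.rel a w w}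

/-- Every world has at least one alive agent. -/
def NoEmptyWorld (M : PEData A AP W) : Prop := ∀ w : W, (M.live w).Nonempty

/-- Distinct worlds with the same alive agents are distinguished by some alive agent. -/
def Proper (M : PEData A AP W) : Prop :=
  ∀ w w' : W, w ≠ w' → M.live w = M.live w' → ∃ a ∈ M.live w, ¬ M.rel a w w'

/-- The model has no sub-world. -/
def Minimal (M : PEData A AP W) : Prop :=
  ∀ w w' : W, M.live w ⊂ M.live w' → ∃ a ∈ M.live w, ¬ M.rel a w w'

/-- The model has all sub-worlds. -/
def Maximal (M : PEData A AP W) : Prop :=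
  ∀ w' : W, ∀ B : Set A, B.Nonempty → B ⊂ M.live w' →
    ∃ w : W, M.live w = B ∧ ∀ a ∈ B, M.rel a w w'

end PEData

/-- Satisfaction on partial epistemic models: `M,w ⊨ D_B φ` iff `φ` holds at every `w'`
with `w ∼_a w'` for all `a ∈ B`. -/
def PEData.sat {A AP W : Type} (M : PEData A AP W) : W → Form A AP → Prop
  | w, .atom p => p ∈ M.label w
  | w, .neg φ => ¬ M.sat w φ
  | w, .and φ ψ => M.sat w φ ∧ M.sat w ψ
  | w, .dk B _ φ => ∀ w' : W, (∀ a ∈ B, M.rel a w w') → M.sat w' φ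

/-- The partial epistemic model `κ(C)` associated with a simplicial model `C`:
same worlds, `w ∼_a w'` iff `a ∈ chi(w ∩ w')`, same labelling. -/
def kappa {A AP V : Type} (C : SimpData A AP V) : PEData A AP {w : Finset V // w ∈ C.Wld} where
  rel := fun a w w' => a ∈ C.chi '' ((↑w.1 : Set V) ∩ ↑w'.1)
  label := fun w => C.label w.1

/-- Vertices of `σ(M)`: pairs `v^w_a = (a, [w]_a)` with `a` alive in `w`. -/
def sigmaVert {A AP W : Type} (M : PEData A AP W) : Type :=
  {v : A × Set W // ∃ w : W, M.rel v.1 w w ∧ v.2 = {w' | M.rel v.1 w w'}}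

/-- The world `X_w = { v^w_a | a ∈ live(w) }` of `σ(M)`. -/
def sigmaWorld {A AP W : Type} [Fintype A] (M : PEData A AP W) (w : W) :
    Finset (sigmaVert M) :=
  ((Finset.univ : Finset A).filter (fun a => M.rel a w w)).attach.image
    (fun a => ⟨(a.1, {w' | M.rel a.1 w w'}),
      ⟨w, by exact (Finset.mem_filter.mp a.2).2, rfl⟩⟩)

/-- The simplicial model `σ(M)` associated with a partial epistemic model `M`:
simplexes are the nonempty subsets of the sets `X_w`, worlds are the `X_w`,
colouring is the first projection, and `ℓ(X_w) = L(w)`. -/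
def sigmaModel {A AP W : Type} [Fintype A] (M : PEData A AP W) :
    SimpData A AP (sigmaVert M) where
  S := {X | X.Nonempty ∧ ∃ w : W, X ⊆ sigmaWorld M w}
  chi := fun v => v.1.1
  Wld := {X | ∃ w : W, X = sigmaWorld M w}
  label := fun X => {p | ∃ w : W, X = sigmaWorld M w ∧ p ∈ M.label w}

/-! ### Pseudo-models, the canonical model and unravelling -/

/-- The data of a pseudo-model: a relation `∼_B` for every group `B ⊆ A`. -/
structure PseudoData (A AP W : Type) where
  rel : Finset A → W → W → Prop
  label : W → Set AP

/-- `M` is a pseudo-model: each `∼_B` is symmetric and transitive, the relations are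
antitone (`∼_{B'} ⊆ ∼_B` for `B ⊆ B'`), and `w ∼_B w` together with `w ∼_{B'} w`
implies `w ∼_{B ∪ B'} w`. -/
def PseudoData.IsPseudo {A AP W : Type} [DecidableEq A] (M : PseudoData A AP W) : Prop :=
  (∀ B : Finset A, Symmetric (M.rel B)) ∧
  (∀ B : Finset A, Transitive (M.rel B)) ∧
  (∀ B B' : Finset A, B ⊆ B' → ∀ w w' : W, M.rel B' w w' → M.rel B w w') ∧
  (∀ (w : W) (B B' : Finset A), M.rel B w w → M.rel B' w w → M.rel (B ∪ B') w w)

/-- Satisfaction on pseudo-models: `D_B φ` quantifies over `∼_B`-successors. -/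
def PseudoData.sat {A AP W : Type} (M : PseudoData A AP W) : W → Form A AP → Prop
  | w, .atom p => p ∈ M.label w
  | w, .neg φ => ¬ M.sat w φ
  | w, .and φ ψ => M.sat w φ ∧ M.sat w ψ
  | w, .dk B _ φ => ∀ w' : W, M.rel B w w' → M.sat w' φ

/-- The canonical pseudo-model of a proof system `P`: worlds are the maximal
`P`-consistent sets, `Γ ∼_B Δ` iff every `φ` with `D_B φ ∈ Γ` satisfies `φ ∈ Δ`,
and `L(Γ) = Γ ∩ AP`. -/
def canonicalPsm (A AP : Type) [Fintype A] [Nonempty AP] (P : Form A AP → Prop) :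
    PseudoData A AP {Γ : Set (Form A AP) // MaxConsistent P Γ} where
  rel := fun B Γ Δ => ∀ (hB : B.Nonempty) (φ : Form A AP), Form.dk B hB φ ∈ Γ.1 → φ ∈ Δ.1
  label := fun Γ => {p | Form.atom p ∈ Γ.1}

/-- `IsHist M w l` : the sequence starting at `w` with steps `l` is a history of `M`. -/
def IsHist {A AP W : Type} (M : PseudoData A AP W) : W → List (Finset A × W) → Prop
  | _, [] => True
  | w, (B, w') :: t => M.rel B w w' ∧ IsHist M w' t

/-- A history `(w₀, B₁, w₁, …, B_k, w_k)` of a pseudo-model `M`. -/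
structure Hist {A AP W : Type} (M : PseudoData A AP W) where
  first : W
  steps : List (Finset A × W)
  valid : IsHist M first steps

/-- The last world of a history. -/
def Hist.last {A AP W : Type} {M : PseudoData A AP W} (h : Hist M) : W :=
  (h.steps.map Prod.snd).getLastD h.first

/-- `h →_a h'` : `h'` extends `h` by one step `(B, w)` with `a ∈ B`. -/
def histStep {A AP W : Type} (M : PseudoData A AP W) (a : A) (h h' : Hist M) : Prop :=
  ∃ (B : Finset A) (w : W), a ∈ B ∧ h'.first = h.first ∧ h'.steps = h.steps ++ [(B, w)]

/-- `∼^U_a` : the symmetric-transitive closure of `→_a`. -/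
def histRel {A AP W : Type} (M : PseudoData A AP W) (a : A) : Hist M → Hist M → Prop :=
  Relation.TransGen (fun h h' => histStep M a h h' ∨ histStep M a h' h)

/-- The unravelling `U(M)` of a pseudo-model `M`: worlds are histories, relations are
the `∼^U_a`, and `L^U(h) = L(last h)`. -/
def unravel {A AP W : Type} (M : PseudoData A AP W) : PEData A AP (Hist M) where
  rel := histRel M
  label := fun h => M.label h.last

/-- World-equivalence `w ≡ w'` : same alive agents and related by every alive agent. -/
def pequiv {A AP W : Type} (M : PEData A AP W) (w w' : W) : Prop :=
  M.live w = M.live w' ∧ ∀ a ∈ M.live w, M.rel a w w'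

/-- The quotient of a partial epistemic model by world-equivalence. -/
def properify {A AP W : Type} (M : PEData A AP W) : PEData A AP (Quot (pequiv M)) where
  rel := fun a x y => ∃ w w' : W, x = Quot.mk _ w ∧ y = Quot.mk _ w' ∧ M.rel a w w'
  label := fun x => {p | ∃ w : W, x = Quot.mk _ w ∧ p ∈ M.label w}

/-! ### Local simplicial models, morphisms and the guarded positive fragment -/

/-- The data of a local simplicial model: atomic propositions label the vertices. -/
structure LocalSimpData (A AP V : Type) where
  S : Set (Finset V)
  chi : V → A
  Wld : Set (Finset V)
  vlabel : V → Set AP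

namespace LocalSimpData

variable {A AP V : Type}

/-- A facet: a simplex maximal under inclusion. -/
def IsFacet (C : LocalSimpData A AP V) (X : Finset V) : Prop :=
  X ∈ C.S ∧ ∀ Y ∈ C.S, X ⊆ Y → X = Y

/-- `C` is a local simplicial model with respect to the ownership map `owner : AP → A`:
a chromatic simplicial complex with `Facets ⊆ Wld ⊆ S`, where each vertex is labelled
with atomic propositions belonging to its colour. -/
def IsModel (C : LocalSimpData A AP V) (owner : AP → A) : Prop :=
  (∀ X ∈ C.S, X.Nonempty) ∧
  (∀ v : V, ({v} : Finset V) ∈ C.S) ∧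
  (∀ X ∈ C.S, ∀ Y : Finset V, Y ⊆ X → Y.Nonempty → Y ∈ C.S) ∧
  (∀ X ∈ C.S, ∀ v ∈ X, ∀ w ∈ X, C.chi v = C.chi w → v = w) ∧
  (∀ X, C.IsFacet X → X ∈ C.Wld) ∧ C.Wld ⊆ C.S ∧
  (∀ v : V, ∀ p ∈ C.vlabel v, owner p = C.chi v)

/-- The labelling of a world: the union of the labellings of its vertices. -/
def wlabel (C : LocalSimpData A AP V) (X : Finset V) : Set AP :=
  ⋃ v ∈ X, C.vlabel v

end LocalSimpData

/-- Purely propositional formulas. -/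
inductive PForm (AP : Type) : Type
  | atom : AP → PForm AP
  | neg : PForm AP → PForm AP
  | and : PForm AP → PForm AP → PForm AP

/-- The atomic propositions occurring in a propositional formula. -/
def PForm.atoms {AP : Type} : PForm AP → Set AP
  | .atom p => {p}
  | .neg ψ => ψ.atoms
  | .and ψ χ => ψ.atoms ∪ χ.atoms

/-- Satisfaction of propositional formulas at a world of a local simplicial model. -/
def PForm.psat {A AP V : Type} (C : LocalSimpData A AP V) (w : Finset V) : PForm AP → Prop
  | .atom p => p ∈ C.wlabel w
  | .neg ψ => ¬ PForm.psat C w ψ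
  | .and ψ χ => PForm.psat C w ψ ∧ PForm.psat C w χ

/-- The guarded positive epistemic fragment:
`φ ::= (alive_B ⇒ ψ_B) | φ∧φ | φ∨φ | D_U φ | C_U φ`. -/
inductive GForm (A AP : Type) : Type
  | guard : Finset A → PForm AP → GForm A AP
  | and : GForm A AP → GForm A AP → GForm A AP
  | or : GForm A AP → GForm A AP → GForm A AP
  | dk : Finset A → GForm A AP → GForm A AP
  | ck : Finset A → GForm A AP → GForm A AP

/-- Well-formedness of guarded formulas: in a guard `alive_B ⇒ ψ_B`, all atomic
propositions of `ψ_B` belong to agents of `B`. -/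
def GForm.WF {A AP : Type} (owner : AP → A) : GForm A AP → Prop
  | .guard B ψ => ∀ p ∈ ψ.atoms, owner p ∈ B
  | .and φ₁ φ₂ => φ₁.WF owner ∧ φ₂.WF owner
  | .or φ₁ φ₂ => φ₁.WF owner ∧ φ₂.WF owner
  | .dk _ φ => φ.WF owner
  | .ck _ φ => φ.WF owner

/-- Reachability through a sequence of worlds, consecutive ones sharing a
`U`-coloured simplex. -/
def creach {A AP V : Type} (C : LocalSimpData A AP V) (U : Finset A) :
    Finset V → Finset V → Prop :=
  Relation.ReflTransGen
    (fun X Y => Y ∈ C.Wld ∧ (↑U : Set A) ⊆ C.chi '' ((↑X : Set V) ∩ ↑Y))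

/-- Satisfaction of guarded positive formulas on local simplicial models. -/
def GForm.gsat {A AP V : Type} (C : LocalSimpData A AP V) :
    Finset V → GForm A AP → Prop
  | w, .guard B ψ => ((↑B : Set A) ⊆ C.chi '' (↑w : Set V)) → ψ.psat C w
  | w, .and φ₁ φ₂ => φ₁.gsat C w ∧ φ₂.gsat C w
  | w, .or φ₁ φ₂ => φ₁.gsat C w ∨ φ₂.gsat C w
  | w, .dk U φ => ∀ w' ∈ C.Wld, (↑U : Set A) ⊆ C.chi '' ((↑w : Set V) ∩ ↑w') → φ.gsat C w'
  | w, .ck U φ => ∀ w' ∈ C.Wld, creach C U w w' → φ.gsat C w'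

/-- Image of a simplex under a vertex map. -/
def fimage {V V' : Type} (f : V → V') (X : Finset V) : Finset V' :=
  X.image f

/-- Morphisms of local simplicial models: map simplexes to simplexes and worlds to
worlds, preserving colours and vertex labellings. -/
def IsMorphism {A AP V V' : Type} (C : LocalSimpData A AP V) (D : LocalSimpData A AP V')
    (f : V → V') : Prop :=
  (∀ X ∈ C.S, fimage f X ∈ D.S) ∧
  (∀ X ∈ C.Wld, fimage f X ∈ D.Wld) ∧
  (∀ v : V, D.chi (f v) = C.chi v) ∧
  (∀ v : V, D.vlabel (f v) = C.vlabel v)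

end

/-!
In the canonical pseudo-model, agent `a` is alive at a history iff `alive_a` belongs to its last
world. Histories related by `∼^U_a` have the same first world and coincide once their trailing
`a`-steps are removed, since this is invariant under `→_a`. If that holds for every `a ∈ B`, the
two histories branch off a common history through `B`-steps only, so their last worlds are
`∼_B`-related as soon as `B` is alive there.

Minimality: with `B` the agents alive at `h`, the last world of `h` contains `alive_B` (by
`Union`) and `dead_{A∖B}`, so by `Min` every `∼_B`-successor satisfies `dead_{A∖B}`; a history
related to `h` by all of `B` therefore has no further alive agent. Maximality: `Max` gives a
`∼_B`-successor of the last world of `h'` containing `dead_{A∖B}` (and `alive_B`, by symmetry),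
and appending it to `h'` as a `B`-step yields the required history. Both properties pass to the
quotient by `≡`, whose relations and alive sets are those of representatives.
-/

theorem Relation.rel_of_reflTransGen_of_rel_self {α : Type*} {r : α → α → Prop}
    (hsymm : ∀ {x y}, r x y → r y x) (htrans : ∀ {x y z}, r x y → r y z → r x z)
    {w x y : α}
    (hx : Relation.ReflTransGen r w x) (hy : Relation.ReflTransGen r w y) (hxx : r x x) :
    r x y := by
  have hxw : r x w := by
    clear hy
    induction hx using Relation.ReflTransGen.head_induction_on with
    | refl => exact hxx
    | head hwc _ ih => exact htrans ih (hsymm hwc)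
  induction hy with
  | refl => exact hxw
  | tail _ hbc ih => exact htrans ih hbc

namespace List

variable {α : Type*}

theorem dropWhile_and (p q : α → Bool) (l : List α) :
    l.dropWhile (fun x => p x && q x) =
      if (l.dropWhile q).length ≤ (l.dropWhile p).length then l.dropWhile p
      else l.dropWhile q := by
  induction l with
  | nil => simp
  | cons x l ih =>
    have hp := length_dropWhile_le p l
    have hq := length_dropWhile_le q l
    cases hpx : p x <;> cases hqx : q x <;>
      simp [hpx, hqx, ih] <;> omega

theorem rdropWhile_and_eq {p q : α → Bool} {s t : List α}
    (hp : s.rdropWhile p = t.rdropWhile p) (hq : s.rdropWhile q = t.rdropWhile q) :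
    s.rdropWhile (fun x => p x && q x) = t.rdropWhile (fun x => p x && q x) := by
  simp only [rdropWhile, reverse_inj] at hp hq ⊢
  rw [dropWhile_and, dropWhile_and, hp, hq]

end List

section Valuation

variable {A AP : Type}

structure IsValuation (v : Form A AP → Prop) : Prop where
  neg : ∀ φ, v φ.neg ↔ ¬ v φ
  and : ∀ φ ψ, v (φ.and ψ) ↔ v φ ∧ v ψ

theorem isTaut_iff {φ : Form A AP} : IsTaut φ ↔ ∀ v, IsValuation v → v φ :=
  ⟨fun h v hv => h v hv.neg hv.and, fun h v hneg hand => h v ⟨hneg, hand⟩⟩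

namespace IsValuation

variable {v : Form A AP → Prop} (hv : IsValuation v)
include hv

theorem or (φ ψ : Form A AP) : v (φ.or ψ) ↔ v φ ∨ v ψ := by
  rw [Form.or, hv.neg, hv.and, hv.neg, hv.neg]; tauto

theorem imp (φ ψ : Form A AP) : v (φ.imp ψ) ↔ (v φ → v ψ) := by
  rw [Form.imp, hv.or, hv.neg]; tauto

variable [Nonempty AP]

theorem verum : v (Form.verum : Form A AP) := by
  rw [Form.verum, hv.or, hv.neg]; exact em _

theorem falsum : ¬ v (Form.falsum : Form A AP) := by
  rw [Form.falsum, hv.neg, not_not]; exact hv.verum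

theorem bigAnd (L : List (Form A AP)) : v (Form.bigAnd L) ↔ ∀ ψ ∈ L, v ψ := by
  induction L with
  | nil => simpa [Form.bigAnd] using hv.verum
  | cons φ L ih => simp [Form.bigAnd, hv.and, ih]

theorem bigOr (L : List (Form A AP)) : v (Form.bigOr L) ↔ ∃ ψ ∈ L, v ψ := by
  induction L with
  | nil => simpa [Form.bigOr] using hv.falsum
  | cons φ L ih => simp [Form.bigOr, hv.or, ih]

end IsValuation

end Valuation

section Deduction

variable {A AP : Type} [Fintype A] [Nonempty AP] {Ax : Form A AP → Prop}

theorem Prf.mp_taut {φ ψ : Form A AP} (ht : IsTaut (φ.imp ψ)) (h : Prf Ax φ) : Prf Ax ψ :=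
  (Prf.taut ht).mp h

theorem Prf.dk_imp {φ ψ : Form A AP} {B : Finset A} (hB : B.Nonempty)
    (h : Prf Ax (φ.imp ψ)) : Prf Ax ((Form.dk B hB φ).imp (Form.dk B hB ψ)) :=
  (Prf.axK B hB).mp (Prf.nec B hB h)

variable {Γ : Set (Form A AP)}

theorem ProvesFrom.of_prf {φ : Form A AP} (h : Prf Ax φ) : ProvesFrom (Prf Ax) Γ φ :=
  ⟨[], by simp, h.mp_taut (isTaut_iff.2 fun v hv => by rw [hv.imp, hv.imp]; exact fun h _ => h)⟩

theorem ProvesFrom.of_mem {φ : Form A AP} (h : φ ∈ Γ) : ProvesFrom (Prf Ax) Γ φ :=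
  ⟨[φ], by simpa using h, .taut (isTaut_iff.2 fun v hv => by simp [hv.imp, hv.bigAnd])⟩

theorem ProvesFrom.mp {φ ψ : Form A AP} (himp : ProvesFrom (Prf Ax) Γ (φ.imp ψ))
    (h : ProvesFrom (Prf Ax) Γ φ) : ProvesFrom (Prf Ax) Γ ψ := by
  obtain ⟨L₁, hL₁, hp₁⟩ := himp
  obtain ⟨L₂, hL₂, hp₂⟩ := h
  refine ⟨L₁ ++ L₂, by simpa [or_imp, forall_and] using ⟨hL₁, hL₂⟩, ?_⟩
  refine ((Prf.taut ?_).mp hp₁).mp hp₂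
  rw [isTaut_iff]
  intro v hv
  simp only [hv.imp, hv.bigAnd, List.mem_append, or_imp, forall_and]
  tauto

theorem ProvesFrom.mp_taut {φ ψ : Form A AP} (ht : IsTaut (φ.imp ψ))
    (h : ProvesFrom (Prf Ax) Γ φ) : ProvesFrom (Prf Ax) Γ ψ :=
  (ProvesFrom.of_prf (Prf.taut ht)).mp h

theorem ProvesFrom.neg_of_not_consistentSet_insert {φ : Form A AP}
    (h : ¬ ConsistentSet (Prf Ax) (insert φ Γ)) : ProvesFrom (Prf Ax) Γ φ.neg := by
  rw [ConsistentSet, not_not] at h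
  obtain ⟨L, hL, hp⟩ := h
  refine ⟨L.filter (· ≠ φ), fun γ hγ => ?_, hp.mp_taut ?_⟩
  · obtain ⟨hγL, hγφ⟩ := List.mem_filter.1 hγ
    exact (hL γ hγL).resolve_left (by simpa using hγφ)
  · rw [isTaut_iff]
    intro v hv
    simp only [hv.imp, hv.bigAnd, hv.neg, List.mem_filter]
    intro hL hL' hφ
    refine hv.falsum (hL fun ψ hψ => ?_)
    by_cases hψφ : ψ = φ
    · exact hψφ ▸ hφ
    · exact hL' ψ ⟨hψ, by simpa using hψφ⟩

theorem ProvesFrom.mem_of_closed {T : Set (Form A AP)} (hprf : ∀ φ, Prf Ax φ → φ ∈ T)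
    (hmp : ∀ φ ψ, φ.imp ψ ∈ T → φ ∈ T → ψ ∈ T) (hΓ : Γ ⊆ T) {φ : Form A AP}
    (h : ProvesFrom (Prf Ax) Γ φ) : φ ∈ T := by
  obtain ⟨L, hL, hp⟩ := h
  induction L generalizing φ with
  | nil => exact hmp _ _ (hprf _ hp) (hprf _ (Prf.taut (isTaut_iff.2 fun v hv => hv.verum)))
  | cons ψ L ih =>
    refine hmp ψ φ (ih (fun γ hγ => hL γ (List.mem_cons_of_mem _ hγ)) (hp.mp_taut ?_))
      (hΓ (hL ψ List.mem_cons_self))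
    rw [isTaut_iff]
    intro v hv
    simp only [Form.bigAnd, hv.imp, hv.and]
    tauto

end Deduction

namespace MaxConsistent

variable {A AP : Type} [Fintype A] [Nonempty AP] {Ax : Form A AP → Prop}
  {Γ : Set (Form A AP)} (hΓ : MaxConsistent (Prf Ax) Γ)
include hΓ

theorem mem_of_provesFrom {φ : Form A AP} (h : ProvesFrom (Prf Ax) Γ φ) : φ ∈ Γ := by
  by_contra hφ
  have hneg := ProvesFrom.neg_of_not_consistentSet_insert (hΓ.2 φ hφ)
  refine hΓ.1 ((h.mp_taut ?_).mp hneg)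
  rw [isTaut_iff]
  intro v hv
  simp only [hv.imp, hv.neg]
  exact fun hφ hnφ => (hnφ hφ).elim

theorem mem_of_prf {φ : Form A AP} (h : Prf Ax φ) : φ ∈ Γ :=
  hΓ.mem_of_provesFrom (.of_prf h)

theorem mem_of_imp_mem {φ ψ : Form A AP} (himp : φ.imp ψ ∈ Γ) (h : φ ∈ Γ) : ψ ∈ Γ :=
  hΓ.mem_of_provesFrom ((ProvesFrom.of_mem himp).mp (.of_mem h))

theorem falsum_not_mem : (Form.falsum : Form A AP) ∉ Γ :=
  fun h => hΓ.1 (.of_mem h)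

theorem neg_mem_iff {φ : Form A AP} : φ.neg ∈ Γ ↔ φ ∉ Γ := by
  refine ⟨fun hn h => hΓ.falsum_not_mem (hΓ.mem_of_provesFrom ?_), fun h =>
    hΓ.mem_of_provesFrom (.neg_of_not_consistentSet_insert (hΓ.2 φ h))⟩
  refine ((ProvesFrom.of_mem h).mp_taut ?_).mp (.of_mem hn)
  rw [isTaut_iff]
  intro v hv
  simp only [hv.imp, hv.neg]
  exact fun hφ hnφ => (hnφ hφ).elim

theorem bigAnd_mem_iff {L : List (Form A AP)} :
    Form.bigAnd L ∈ Γ ↔ ∀ ψ ∈ L, ψ ∈ Γ := by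
  refine ⟨fun h ψ hψ => hΓ.mem_of_provesFrom ((ProvesFrom.of_mem h).mp_taut ?_),
    fun h => hΓ.mem_of_provesFrom ⟨L, h, .taut (isTaut_iff.2 fun v hv => (hv.imp _ _).2 id)⟩⟩
  rw [isTaut_iff]
  intro v hv
  rw [hv.imp, hv.bigAnd]
  exact fun hL => hL ψ hψ

theorem and_mem {φ ψ : Form A AP} (hφ : φ ∈ Γ) (hψ : ψ ∈ Γ) : φ.and ψ ∈ Γ := by
  refine hΓ.mem_of_provesFrom ⟨[φ, ψ], by simp [hφ, hψ], .taut ?_⟩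
  rw [isTaut_iff]
  intro v hv
  simp [hv.imp, hv.bigAnd, hv.and]

theorem exists_mem_of_bigOr_mem {L : List (Form A AP)} (h : Form.bigOr L ∈ Γ) :
    ∃ ψ ∈ L, ψ ∈ Γ := by
  by_contra! hL
  refine hΓ.1 ⟨Form.bigOr L :: L.map Form.neg, ?_, .taut ?_⟩
  · simpa [h] using fun ψ hψ => (hΓ.neg_mem_iff).2 (hL ψ hψ)
  · rw [isTaut_iff]
    intro v hv
    rw [hv.imp, hv.bigAnd]
    intro hall
    obtain ⟨ψ, hψ, hvψ⟩ := (hv.bigOr L).1 (hall _ List.mem_cons_self)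
    exact ((hv.neg ψ).1 (hall _ (List.mem_cons_of_mem _ (List.mem_map_of_mem hψ))) hvψ).elim

theorem deadAgent_mem_iff {a : A} : Form.deadAgent a ∈ Γ ↔ Form.aliveAgent a ∉ Γ := by
  rw [Form.aliveAgent, hΓ.neg_mem_iff, not_not]

theorem deadGrp_mem_iff {C : Finset A} :
    Form.deadGrp C ∈ Γ ↔ ∀ a ∈ C, Form.aliveAgent a ∉ Γ := by
  simp [Form.deadGrp, hΓ.bigAnd_mem_iff, hΓ.deadAgent_mem_iff]

theorem exists_aliveAgent_mem : ∃ a, Form.aliveAgent a ∈ Γ := by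
  obtain ⟨ψ, hψ, hψΓ⟩ := hΓ.exists_mem_of_bigOr_mem (hΓ.mem_of_prf Prf.axNE)
  obtain ⟨a, -, rfl⟩ := List.mem_map.1 hψ
  exact ⟨a, hψΓ⟩

theorem aliveGrp_mem_of_forall {B : Finset A} (hB : B.Nonempty)
    (h : ∀ a ∈ B, Form.aliveAgent a ∈ Γ) : Form.aliveGrp B hB ∈ Γ := by
  induction hB using Finset.Nonempty.cons_induction with
  | singleton a => exact h a (Finset.mem_singleton_self a)
  | cons a B haB hB ih =>
    have hunion := hΓ.mem_of_imp_mem (hΓ.mem_of_prf (Prf.axUnion {a} B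
      (Finset.singleton_nonempty a) hB)) (hΓ.and_mem (h a (Finset.mem_cons_self a B))
        (ih fun b hb => h b (Finset.mem_cons_of_mem hb)))
    have hcons : ({a} ∪ B : Finset A) = Finset.cons a B haB := by
      rw [Finset.cons_eq_insert, Finset.insert_eq]
    convert hunion using 2
    exact hcons.symm

theorem aliveAgent_mem_of_aliveGrp {B : Finset A} {hB : B.Nonempty}
    (h : Form.aliveGrp B hB ∈ Γ) {a : A} (ha : a ∈ B) : Form.aliveAgent a ∈ Γ :=
  hΓ.neg_mem_iff.2 fun hdead => hΓ.neg_mem_iff.1 h (hΓ.mem_of_imp_mem (hΓ.mem_of_prf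
    (Prf.axMono {a} B (Finset.singleton_nonempty a) hB (Finset.singleton_subset_iff.2 ha))) hdead)

end MaxConsistent

section Lindenbaum

variable {A AP : Type} [Fintype A] [Nonempty AP] {Ax : Form A AP → Prop}

theorem exists_maxConsistent_superset {Γ : Set (Form A AP)} (h : ConsistentSet (Prf Ax) Γ) :
    ∃ Δ, Γ ⊆ Δ ∧ MaxConsistent (Prf Ax) Δ := by
  have hchains : ∀ c ⊆ {Δ | ConsistentSet (Prf Ax) Δ}, IsChain (· ⊆ ·) c →
      c.Nonempty → ConsistentSet (Prf Ax) (⋃₀ c) := by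
    rintro c hc hchain hne ⟨L, hL, hp⟩
    obtain ⟨Δ, hΔc, hLΔ⟩ :=
      hchain.directedOn.exists_mem_subset_of_finite_of_subset_sUnion hne (List.finite_toSet L) hL
    exact hc hΔc ⟨L, hLΔ, hp⟩
  obtain ⟨Δ, hΓΔ, hΔ⟩ := zorn_subset_nonempty _
    (fun c hc hchain hne => ⟨_, hchains c hc hchain hne, fun _ => Set.subset_sUnion_of_mem⟩)
    Γ h
  exact ⟨Δ, hΓΔ, hΔ.prop, fun φ hφ hcons =>
    hφ (hΔ.2 hcons (Set.subset_insert φ Δ) (Set.mem_insert φ Δ))⟩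

end Lindenbaum

section Canonical

variable {A AP : Type} [Fintype A] [Nonempty AP] {Ax : Form A AP → Prop}

theorem exists_canonical_rel_neg_mem {Γ : {Γ // MaxConsistent (Prf Ax) Γ}} {B : Finset A}
    {hB : B.Nonempty} {φ : Form A AP} (h : (Form.dk B hB φ).neg ∈ Γ.1) :
    ∃ Δ, (canonicalPsm A AP (Prf Ax)).rel B Γ Δ ∧ φ.neg ∈ Δ.1 := by
  set S : Set (Form A AP) := {ψ | Form.dk B hB ψ ∈ Γ.1}
  have hS : ∀ {ψ}, ProvesFrom (Prf Ax) S ψ → Form.dk B hB ψ ∈ Γ.1 :=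
    ProvesFrom.mem_of_closed (T := S) (fun ψ hψ => Γ.2.mem_of_prf (Prf.nec B hB hψ))
      (fun ψ χ himp hψ => Γ.2.mem_of_imp_mem (Γ.2.mem_of_imp_mem
        (Γ.2.mem_of_prf (Prf.axK B hB)) himp) hψ) subset_rfl
  have hcons : ConsistentSet (Prf Ax) (insert φ.neg S) := by
    by_contra hincons
    refine (Γ.2.neg_mem_iff.1 h) (hS ?_)
    refine (ProvesFrom.neg_of_not_consistentSet_insert hincons).mp_taut ?_
    rw [isTaut_iff]
    intro v hv
    rw [hv.imp, hv.neg, hv.neg, not_not]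
    exact id
  obtain ⟨Δ, hSΔ, hΔ⟩ := exists_maxConsistent_superset hcons
  exact ⟨⟨Δ, hΔ⟩, fun _ ψ hψ => hSΔ (Set.mem_insert_of_mem _ hψ),
    hSΔ (Set.mem_insert _ _)⟩

variable {B : Finset A} {Γ Δ Θ : {Γ // MaxConsistent (Prf Ax) Γ}}

theorem canonical_rel_symm (h : (canonicalPsm A AP (Prf Ax)).rel B Γ Δ) :
    (canonicalPsm A AP (Prf Ax)).rel B Δ Γ := by
  intro hB ψ hψ
  by_contra hψΓ
  have hbox : Form.dk B hB (Form.dk B hB ψ.neg.neg).neg ∈ Γ.1 :=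
    Γ.2.mem_of_imp_mem (Γ.2.mem_of_prf (Prf.axB B hB)) (Γ.2.neg_mem_iff.2 hψΓ)
  refine Δ.2.neg_mem_iff.1 (h hB _ hbox) (Δ.2.mem_of_imp_mem (Δ.2.mem_of_prf
    (Prf.dk_imp hB (Prf.taut (isTaut_iff.2 fun v hv => ?_)))) hψ)
  rw [hv.imp, hv.neg, hv.neg, not_not]
  exact id

theorem canonical_rel_trans (h : (canonicalPsm A AP (Prf Ax)).rel B Γ Δ)
    (h' : (canonicalPsm A AP (Prf Ax)).rel B Δ Θ) : (canonicalPsm A AP (Prf Ax)).rel B Γ Θ :=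
  fun hB ψ hψ => h' hB ψ (h hB _ (Γ.2.mem_of_imp_mem (Γ.2.mem_of_prf (Prf.ax4 B hB)) hψ))

theorem canonical_rel_anti {B' : Finset A} (hBB' : B ⊆ B')
    (h : (canonicalPsm A AP (Prf Ax)).rel B' Γ Δ) : (canonicalPsm A AP (Prf Ax)).rel B Γ Δ :=
  fun hB ψ hψ => h (hB.mono hBB') ψ
    (Γ.2.mem_of_imp_mem (Γ.2.mem_of_prf (Prf.axMono B B' hB (hB.mono hBB') hBB')) hψ)

theorem aliveGrp_mem_iff_exists_canonical_rel (hB : B.Nonempty) :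
    Form.aliveGrp B hB ∈ Γ.1 ↔ ∃ Δ, (canonicalPsm A AP (Prf Ax)).rel B Γ Δ := by
  refine ⟨fun h => ?_, fun ⟨Δ, hrel⟩ => ?_⟩
  · obtain ⟨Δ, hrel, -⟩ := exists_canonical_rel_neg_mem h
    exact ⟨Δ, hrel⟩
  · exact Γ.2.neg_mem_iff.2 fun hdead => Δ.2.falsum_not_mem (hrel hB _ hdead)

theorem alive_subset_of_canonical_rel_of_min (hmin : ∀ φ, MinAx φ → Ax φ)
    (hB : B.Nonempty) (hΓ : ∀ a, Form.aliveAgent a ∈ Γ.1 ↔ a ∈ B)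
    (hrel : (canonicalPsm A AP (Prf Ax)).rel B Γ Δ)
    {a : A} (ha : Form.aliveAgent a ∈ Δ.1) : a ∈ B := by
  by_contra haB
  have hBuniv : B ≠ Finset.univ := fun hB => haB (hB ▸ Finset.mem_univ a)
  have hdead : Form.deadGrp Bᶜ ∈ Γ.1 :=
    Γ.2.deadGrp_mem_iff.2 fun b hb hbΓ => Finset.mem_compl.1 hb ((hΓ b).1 hbΓ)
  have hknown : Form.dk B hB (Form.deadGrp Bᶜ) ∈ Γ.1 :=
    Γ.2.mem_of_imp_mem (Γ.2.mem_of_prf (Prf.extra (hmin _ ⟨B, hB, hBuniv, rfl⟩)))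
      (Γ.2.and_mem (Γ.2.aliveGrp_mem_of_forall hB fun b hb => (hΓ b).2 hb) hdead)
  exact Δ.2.deadGrp_mem_iff.1 (hrel hB _ hknown) a (Finset.mem_compl.2 haB) ha

theorem exists_canonical_rel_alive_eq_of_max (hmax : ∀ φ, MaxAx φ → Ax φ)
    (hB : B.Nonempty) (hBuniv : B ≠ Finset.univ) (hΓ : ∀ a ∈ B, Form.aliveAgent a ∈ Γ.1) :
    ∃ Δ, (canonicalPsm A AP (Prf Ax)).rel B Γ Δ ∧
      ∀ a, Form.aliveAgent a ∈ Δ.1 ↔ a ∈ B := by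
  have hpossible : (Form.dk B hB (Form.deadGrp Bᶜ).neg).neg ∈ Γ.1 :=
    Γ.2.mem_of_imp_mem (Γ.2.mem_of_prf (Prf.extra (hmax _ ⟨B, hB, hBuniv, rfl⟩)))
      (Γ.2.aliveGrp_mem_of_forall hB hΓ)
  obtain ⟨Δ, hrel, hdead⟩ := exists_canonical_rel_neg_mem hpossible
  rw [Δ.2.neg_mem_iff, Δ.2.neg_mem_iff, not_not, Δ.2.deadGrp_mem_iff] at hdead
  have hΔalive : Form.aliveGrp B hB ∈ Δ.1 :=
    (aliveGrp_mem_iff_exists_canonical_rel hB).2 ⟨Γ, canonical_rel_symm hrel⟩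
  refine ⟨Δ, hrel, fun a => ⟨fun ha => ?_, Δ.2.aliveAgent_mem_of_aliveGrp hΔalive⟩⟩
  by_contra haB
  exact hdead a (Finset.mem_compl.2 haB) ha

end Canonical

section Unravelling

variable {A AP W : Type} {M : PseudoData A AP W}

def pathLast (w : W) (s : List (Finset A × W)) : W := (s.map Prod.snd).getLastD w

@[simp] theorem pathLast_nil (w : W) : pathLast w ([] : List (Finset A × W)) = w := rfl

@[simp] theorem pathLast_cons (w x : W) (B : Finset A) (s : List (Finset A × W)) :
    pathLast w ((B, x) :: s) = pathLast x s := by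
  rw [pathLast, List.map_cons, List.getLastD_cons, pathLast]

theorem pathLast_append (w : W) (s t : List (Finset A × W)) :
    pathLast w (s ++ t) = pathLast (pathLast w s) t := by
  induction s generalizing w with
  | nil => rfl
  | cons e s ih => obtain ⟨B, x⟩ := e; simp [ih]

theorem isHist_append (w : W) (s t : List (Finset A × W)) :
    IsHist M w (s ++ t) ↔ IsHist M w s ∧ IsHist M (pathLast w s) t := by
  induction s generalizing w with
  | nil => simp [IsHist]
  | cons e s ih => obtain ⟨B, x⟩ := e; simp [IsHist, ih, and_assoc]

theorem Hist.last_eq (h : Hist M) : h.last = pathLast h.first h.steps := rfl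

def Hist.extend (h : Hist M) (B : Finset A) (w : W) (hw : M.rel B h.last w) : Hist M :=
  ⟨h.first, h.steps ++ [(B, w)], (isHist_append _ _ _).2 ⟨h.valid, hw, trivial⟩⟩

@[simp] theorem Hist.last_extend (h : Hist M) {B : Finset A} {w : W}
    (hw : M.rel B h.last w) : (h.extend B w hw).last = w := by
  simp [Hist.last_eq, Hist.extend, pathLast_append]

theorem histStep_extend (h : Hist M) {a : A} {B : Finset A} {w : W} (ha : a ∈ B)
    (hw : M.rel B h.last w) : histStep M a h (h.extend B w hw) :=
  ⟨B, w, ha, rfl, rfl⟩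

theorem histStep.exists_rel_last {a : A} {h h' : Hist M} (st : histStep M a h h') :
    ∃ B, a ∈ B ∧ M.rel B h.last h'.last := by
  obtain ⟨B, w, haB, hfirst, hsteps⟩ := st
  have hv := h'.valid
  rw [hsteps, hfirst, isHist_append] at hv
  refine ⟨B, haB, ?_⟩
  simpa [Hist.last_eq, hsteps, hfirst, pathLast_append] using hv.2.1

theorem histRel.rel_last (hsymm : ∀ {B w w'}, M.rel B w w' → M.rel B w' w)
    (htrans : ∀ {B w w' w''}, M.rel B w w' → M.rel B w' w'' → M.rel B w w'')
    (hanti : ∀ {B B'}, B ⊆ B' → ∀ {w w'}, M.rel B' w w' → M.rel B w w') {a : A}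
    {h h' : Hist M} (hr : histRel M a h h') : M.rel {a} h.last h'.last := by
  have step : ∀ {h h' : Hist M}, histStep M a h h' → M.rel {a} h.last h'.last := fun st =>
    let ⟨B, haB, hrel⟩ := st.exists_rel_last
    hanti (Finset.singleton_subset_iff.2 haB) hrel
  induction hr with
  | single hs => exact hs.elim step (fun st => hsymm (step st))
  | tail _ hs ih => exact htrans ih (hs.elim step (fun st => hsymm (step st)))

theorem unravel_isPE : (unravel M).IsPE := by
  refine fun a => ⟨fun _ _ hr => ?_, fun _ _ _ => Relation.TransGen.trans⟩
  induction hr with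
  | single hs => exact .single hs.symm
  | tail _ hs ih => exact .head hs.symm ih

theorem histRel.root_eq {a : A} {h h' : Hist M} (hr : histRel M a h h') :
    (h.first, h.steps.rdropWhile (fun e => a ∈ e.1)) =
      (h'.first, h'.steps.rdropWhile (fun e => a ∈ e.1)) := by
  have step : ∀ {h h' : Hist M}, histStep M a h h' →
      (h.first, h.steps.rdropWhile (fun e => a ∈ e.1)) =
        (h'.first, h'.steps.rdropWhile (fun e => a ∈ e.1)) := by
    rintro h h' ⟨B, w, haB, hfirst, hsteps⟩
    rw [hfirst, hsteps, List.rdropWhile_concat_pos _ _ _ (by simpa using haB)]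
  induction hr with
  | single hs => exact hs.elim step (fun st => (step st).symm)
  | tail _ hs ih => exact ih.trans (hs.elim step (fun st => (step st).symm))

theorem rdropWhile_subset_eq_of_forall {s t : List (Finset A × W)} (B : Finset A)
    (h : ∀ a ∈ B, s.rdropWhile (fun e => a ∈ e.1) = t.rdropWhile (fun e => a ∈ e.1)) :
    s.rdropWhile (fun e => B ⊆ e.1) = t.rdropWhile (fun e => B ⊆ e.1) := by
  induction B using Finset.induction_on with
  | empty =>
    simp only [Finset.empty_subset, decide_true, List.rdropWhile_eq_nil_iff.2, implies_true]
  | insert a B _ ih =>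
    have hsplit : (fun e : Finset A × W => decide (insert a B ⊆ e.1)) =
        fun e => decide (a ∈ e.1) && decide (B ⊆ e.1) := by
      funext e; simp [Finset.insert_subset_iff]
    rw [hsplit]
    exact List.rdropWhile_and_eq (h a (Finset.mem_insert_self a B))
      (ih fun b hb => h b (Finset.mem_insert_of_mem hb))

variable (hanti : ∀ {B B'}, B ⊆ B' → ∀ {w w'}, M.rel B' w w' → M.rel B w w')
include hanti

theorem reflTransGen_rel_pathLast {B : Finset A} :
    ∀ {w : W} {s : List (Finset A × W)}, IsHist M w s → (∀ e ∈ s, B ⊆ e.1) →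
      Relation.ReflTransGen (M.rel B) w (pathLast w s)
  | _, [], _, _ => .refl
  | _, (C, x) :: s, ⟨hrel, hs⟩, hB => by
    rw [pathLast_cons]
    exact .head (hanti (hB _ List.mem_cons_self) hrel)
      (reflTransGen_rel_pathLast hs fun e he => hB e (List.mem_cons_of_mem _ he))

theorem reflTransGen_rel_pathLast_rdropWhile {B : Finset A} {w : W}
    {s : List (Finset A × W)} (hs : IsHist M w s) :
    Relation.ReflTransGen (M.rel B) (pathLast w (s.rdropWhile fun e => B ⊆ e.1))
      (pathLast w s) := by
  have hsplit := s.rdropWhile_append_rtakeWhile (p := fun e => B ⊆ e.1)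
  rw [← hsplit, isHist_append] at hs
  conv_rhs => rw [← hsplit, pathLast_append]
  exact reflTransGen_rel_pathLast hanti hs.2 fun e he => by
    simpa using List.mem_rtakeWhile_imp he

theorem exists_common_ancestor {B : Finset A} (hB : B.Nonempty) {h h' : Hist M}
    (H : ∀ a ∈ B, histRel M a h h') :
    ∃ w, Relation.ReflTransGen (M.rel B) w h.last ∧
      Relation.ReflTransGen (M.rel B) w h'.last := by
  have hfirst : h.first = h'.first := congrArg Prod.fst (H _ hB.choose_spec).root_eq
  have hroot := rdropWhile_subset_eq_of_forall B fun a ha => congrArg Prod.snd (H a ha).root_eq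
  refine ⟨_, reflTransGen_rel_pathLast_rdropWhile hanti h.valid, ?_⟩
  rw [hfirst, hroot]
  exact reflTransGen_rel_pathLast_rdropWhile hanti h'.valid

end Unravelling

section CanonicalUnravelling

variable {A AP : Type} [Fintype A] [Nonempty AP] {Ax : Form A AP → Prop}
  {h h' : Hist (canonicalPsm A AP (Prf Ax))}

theorem unravel_canonical_live_iff {a : A} :
    a ∈ (unravel (canonicalPsm A AP (Prf Ax))).live h ↔ Form.aliveAgent a ∈ h.last.1 := by
  refine ⟨fun hr => (aliveGrp_mem_iff_exists_canonical_rel (Finset.singleton_nonempty a)).2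
    ⟨_, hr.rel_last canonical_rel_symm canonical_rel_trans fun h => canonical_rel_anti h⟩,
    fun ha => ?_⟩
  obtain ⟨Δ, hrel⟩ :=
    (aliveGrp_mem_iff_exists_canonical_rel (Finset.singleton_nonempty a)).1 ha
  have st := histStep_extend h (Finset.mem_singleton_self a) hrel
  exact .tail (.single (Or.inl st)) (Or.inr st)

theorem unravel_canonical_rel_last {B : Finset A} (hB : B.Nonempty)
    (halive : Form.aliveGrp B hB ∈ h.last.1)
    (H : ∀ a ∈ B, (unravel (canonicalPsm A AP (Prf Ax))).rel a h h') :
    (canonicalPsm A AP (Prf Ax)).rel B h.last h'.last := by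
  obtain ⟨w, hw, hw'⟩ := exists_common_ancestor (fun h => canonical_rel_anti h) hB H
  obtain ⟨Δ, hrel⟩ := (aliveGrp_mem_iff_exists_canonical_rel hB).1 halive
  exact Relation.rel_of_reflTransGen_of_rel_self (r := (canonicalPsm A AP (Prf Ax)).rel B)
    canonical_rel_symm canonical_rel_trans hw hw'
    (canonical_rel_trans hrel (canonical_rel_symm hrel))

theorem unravel_canonical_minimal (hmin : ∀ φ, MinAx φ → Ax φ) :
    (unravel (canonicalPsm A AP (Prf Ax))).Minimal := by
  intro h h' hlt
  by_contra! hrel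
  obtain ⟨b, hb', hb⟩ := Set.exists_of_ssubset hlt
  set B := ((unravel (canonicalPsm A AP (Prf Ax))).live h).toFinset
  have hmemB : ∀ a, Form.aliveAgent a ∈ h.last.1 ↔ a ∈ B := by
    simp [B, unravel_canonical_live_iff]
  obtain ⟨a₀, ha₀⟩ := h.last.2.exists_aliveAgent_mem
  have hB : B.Nonempty := ⟨a₀, (hmemB a₀).1 ha₀⟩
  have hrelB := unravel_canonical_rel_last hB
    (h.last.2.aliveGrp_mem_of_forall hB fun a ha => (hmemB a).2 ha)
    fun a ha => hrel a (Set.mem_toFinset.1 ha)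
  exact hb (Set.mem_toFinset.1 (alive_subset_of_canonical_rel_of_min hmin hB hmemB hrelB
    (unravel_canonical_live_iff.1 hb')))

theorem unravel_canonical_maximal (hmax : ∀ φ, MaxAx φ → Ax φ) :
    (unravel (canonicalPsm A AP (Prf Ax))).Maximal := by
  intro h' B hB hlt
  obtain ⟨b, hb', hb⟩ := Set.exists_of_ssubset hlt
  obtain ⟨Δ, hrel, hΔ⟩ := exists_canonical_rel_alive_eq_of_max hmax (B := B.toFinset)
    (by simpa using hB) (fun huniv => hb (by simp [← Set.mem_toFinset, huniv]))
    fun a ha => unravel_canonical_live_iff.1 (hlt.1 (Set.mem_toFinset.1 ha))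
  refine ⟨h'.extend _ Δ hrel, ?_, fun a ha =>
    .single (Or.inr (histStep_extend h' (Set.mem_toFinset.2 ha) hrel))⟩
  ext a
  simp [unravel_canonical_live_iff, hΔ]

end CanonicalUnravelling

section Properify

variable {A AP W : Type} {M : PEData A AP W}

variable (hM : M.IsPE)
include hM

theorem pequiv_equivalence : Equivalence (pequiv M) where
  refl _ := ⟨rfl, fun _ ha => ha⟩
  symm := fun ⟨hlive, hrel⟩ => ⟨hlive.symm, fun a ha => (hM a).1 (hrel a (hlive ▸ ha))⟩
  trans := fun ⟨hlive, hrel⟩ ⟨hlive', hrel'⟩ =>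
    ⟨hlive.trans hlive', fun a ha => (hM a).2 (hrel a ha) (hrel' a (hlive ▸ ha))⟩

theorem properify_rel_mk_iff {a : A} {w w' : W} :
    (properify M).rel a (Quot.mk _ w) (Quot.mk _ w') ↔ M.rel a w w' := by
  refine ⟨fun ⟨v, v', hv, hv', hrel⟩ => ?_, fun h => ⟨w, w', rfl, rfl, h⟩⟩
  have hwv := (pequiv_equivalence hM).eqvGen_iff.1 (Quot.eq.1 hv)
  have hwv' := (pequiv_equivalence hM).eqvGen_iff.1 (Quot.eq.1 hv')
  have hsymm := (hM a).1
  have htrans := (hM a).2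
  have hv_live : M.rel a v v := htrans hrel (hsymm hrel)
  have hv'_live : M.rel a v' v' := htrans (hsymm hrel) hrel
  exact htrans (htrans (hwv.2 a (hwv.1 ▸ hv_live)) hrel)
    (hsymm (hwv'.2 a (hwv'.1 ▸ hv'_live)))

theorem properify_live_mk (w : W) : (properify M).live (Quot.mk _ w) = M.live w :=
  Set.ext fun _ => properify_rel_mk_iff hM

theorem PEData.Minimal.properify (hmin : M.Minimal) : (properify M).Minimal := by
  rintro ⟨w⟩ ⟨w'⟩ hlt
  simp only [properify_live_mk hM] at hlt ⊢
  obtain ⟨a, ha, hrel⟩ := hmin w w' hlt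
  exact ⟨a, ha, fun h => hrel ((properify_rel_mk_iff hM).1 h)⟩

theorem PEData.Maximal.properify (hmax : M.Maximal) : (properify M).Maximal := by
  rintro ⟨w'⟩ B hB hlt
  rw [properify_live_mk hM] at hlt
  obtain ⟨w, hw, hrel⟩ := hmax w' B hB hlt
  exact ⟨Quot.mk _ w, (properify_live_mk hM w).trans hw,
    fun a ha => (properify_rel_mk_iff hM).2 (hrel a ha)⟩

end Properify

/-- Minimality and maximality of the unravelled canonical models: the
unravelling of the canonical pseudo-model of `SCmin` is a minimal partial epistemic
model, the unravelling of the canonical pseudo-model of `SCmax` is a maximal partial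
epistemic model, and the same holds for their quotients by `≡`. -/
theorem unravel_canonical_min_max (A AP : Type) [Fintype A] [Nonempty AP] :
    (unravel (canonicalPsm A AP SCmin)).Minimal ∧
    (unravel (canonicalPsm A AP SCmax)).Maximal ∧
    (properify (unravel (canonicalPsm A AP SCmin))).Minimal ∧
    (properify (unravel (canonicalPsm A AP SCmax))).Maximal := by
  have hmin : (unravel (canonicalPsm A AP SCmin)).Minimal :=
    unravel_canonical_minimal fun _ => id
  have hmax : (unravel (canonicalPsm A AP SCmax)).Maximal :=
    unravel_canonical_maximal fun _ => id
  exact ⟨hmin, hmax, hmin.properify unravel_isPE, hmax.properify unravel_isPE⟩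
end

section
/- Knowledge gain theorem for guarded positive formulas: let C and D be local simplicial models (labellings on vertices), let f : C → D be a morphism of simplicial models, let X be a world of C, and let φ be a guarded positive epistemic formula (from the fragment PL{K,alive}, which allows guarded propositional atoms alive_B ⇒ ψ_B, conjunction, disjunction, distributed knowledge D_U, and common knowledge C_U). Then D,f(X) ⊨ φ implies C,X ⊨ φ. -/
attribute [local instance] Classical.propDecidable

section KGAux

variable {A AP V V' : Type}

theorem wlabel_fimage (C : LocalSimpData A AP V) (D : LocalSimpData A AP V')
    (f : V → V') (hl : ∀ v, D.vlabel (f v) = C.vlabel v) (X : Finset V) :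
    D.wlabel (fimage f X) = C.wlabel X := by
  unfold LocalSimpData.wlabel fimage
  ext p
  simp only [Set.mem_iUnion, exists_prop]
  constructor
  · rintro ⟨v', hv', hp⟩
    obtain ⟨v, hv, rfl⟩ := Finset.mem_image.1 hv'
    exact ⟨v, hv, (hl v) ▸ hp⟩
  · rintro ⟨v, hv, hp⟩
    exact ⟨f v, Finset.mem_image_of_mem f hv, (hl v) ▸ hp⟩

theorem psat_fimage (C : LocalSimpData A AP V) (D : LocalSimpData A AP V')
    (f : V → V') (hl : ∀ v, D.vlabel (f v) = C.vlabel v) (X : Finset V)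
    (ψ : PForm AP) : ψ.psat D (fimage f X) ↔ ψ.psat C X := by
  induction ψ with
  | atom p => simp [PForm.psat, wlabel_fimage C D f hl X]
  | neg ψ ih => simp [PForm.psat, ih]
  | and ψ χ ih1 ih2 => simp [PForm.psat, ih1, ih2]

theorem chi_inter_fimage (C : LocalSimpData A AP V) (D : LocalSimpData A AP V')
    (f : V → V') (hc : ∀ v, D.chi (f v) = C.chi v) (X Y : Finset V) {U : Finset A}
    (h : (↑U : Set A) ⊆ C.chi '' ((↑X : Set V) ∩ ↑Y)) :
    (↑U : Set A) ⊆ D.chi '' ((↑(fimage f X) : Set V') ∩ ↑(fimage f Y)) := by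
  intro a ha
  obtain ⟨v, ⟨hvX, hvY⟩, rfl⟩ := h ha
  exact ⟨f v, ⟨Finset.mem_coe.2 (Finset.mem_image_of_mem f hvX),
    Finset.mem_coe.2 (Finset.mem_image_of_mem f hvY)⟩, hc v⟩

theorem creach_fimage (C : LocalSimpData A AP V) (D : LocalSimpData A AP V')
    (f : V → V') (hf : IsMorphism C D f) (U : Finset A) {X Y : Finset V}
    (h : creach C U X Y) :
    creach D U (fimage f X) (fimage f Y) := by
  induction h with
  | refl => exact Relation.ReflTransGen.refl
  | tail hxy hstep ih =>
    exact ih.tail ⟨hf.2.1 _ hstep.1, chi_inter_fimage C D f hf.2.2.1 _ _ hstep.2⟩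

end KGAux

/-- Knowledge gain theorem for guarded positive formulas: if
`f : C → D` is a morphism of local simplicial models, `X` is a world of `C`, and `φ` is
a guarded positive epistemic formula, then `D,f(X) ⊨ φ` implies `C,X ⊨ φ`. -/
theorem knowledge_gain (A AP V V' : Type) [Fintype A] (owner : AP → A)
    (C : LocalSimpData A AP V) (D : LocalSimpData A AP V')
    (hC : C.IsModel owner) (hD : D.IsModel owner)
    (f : V → V') (hf : IsMorphism C D f)
    (X : Finset V) (hX : X ∈ C.Wld)
    (φ : GForm A AP) (hφ : φ.WF owner) :
    GForm.gsat D (fimage f X) φ → GForm.gsat C X φ := by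
  obtain ⟨hfS, hfW, hfc, hfl⟩ := hf
  induction φ generalizing X with
  | guard B ψ =>
    intro h hB
    refine (psat_fimage C D f hfl X ψ).1 (h ?_)
    intro a ha
    obtain ⟨v, hv, rfl⟩ := hB ha
    exact ⟨f v, Finset.mem_coe.2 (Finset.mem_image_of_mem f hv), hfc v⟩
  | and φ₁ φ₂ ih1 ih2 =>
    rintro ⟨h1, h2⟩
    exact ⟨ih1 X hX hφ.1 h1, ih2 X hX hφ.2 h2⟩
  | or φ₁ φ₂ ih1 ih2 =>
    rintro (h | h)
    · exact Or.inl (ih1 X hX hφ.1 h)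
    · exact Or.inr (ih2 X hX hφ.2 h)
  | dk U φ ih =>
    intro h X' hX' hsub
    exact ih X' hX' hφ
      (h (fimage f X') (hfW _ hX') (chi_inter_fimage C D f hfc X X' hsub))
  | ck U φ ih =>
    intro h X' hX' hr
    exact ih X' hX' hφ
      (h (fimage f X') (hfW _ hX') (creach_fimage C D f ⟨hfS, hfW, hfc, hfl⟩ U hr))
end
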